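/- arXiv:2112.14943 — 4 statements merged into one kernel-verified Lean document; each statement's English description precedes it below -/
import Mathlib

section
/- The maximum of b²c/2 + bcd + c²d/2 over nonnegative reals b, c, d with b+c+d = 1 equals 2/25, attained at b = c = 2/5, d = 1/5. -/
/-!
Since `b + d = 1 - c`, the objective equals `c/2 * ((1 - c)^2 + d * (c - d))`.
For `c ≤ 4/5` bound `d * (c - d) ≤ c^2/4`; the resulting cubic in `c` falls short of `2/25` by
`5/8 * (c - 2/5)^2 * (4/5 - c)`. For `c ≥ 4/5` bound `d * (c - d) ≤ c * (1 - c)` instead, which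
leaves `c * (1 - c) / 2 ≤ 2/25`.
-/

lemma objective_eq_of_add_eq_one {b c d : ℝ} (h : b + c + d = 1) :
    b^2*c/2 + b*c*d + c^2*d/2 = c/2 * ((1 - c)^2 + d * (c - d)) := by
  obtain rfl : b = 1 - c - d := by linarith
  ring

lemma mul_sub_le_sq_div_four (c d : ℝ) : d * (c - d) ≤ c^2/4 := by
  nlinarith [sq_nonneg (c - 2*d)]

lemma cubic_le_of_le {c : ℝ} (hc : c ≤ 4/5) : c/2 * ((1 - c)^2 + c^2/4) ≤ 2/25 := by
  have key : 2/25 - c/2 * ((1 - c)^2 + c^2/4) = 5/8 * (c - 2/5)^2 * (4/5 - c) := by ring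
  nlinarith [mul_nonneg (sq_nonneg (c - 2/5)) (sub_nonneg.2 hc)]

theorem stmt_1 :
    (∀ b c d : ℝ, 0 ≤ b → 0 ≤ c → 0 ≤ d → b + c + d = 1 →
      b^2*c/2 + b*c*d + c^2*d/2 ≤ 2/25) ∧
    (2/5 : ℝ)^2*(2/5)/2 + (2/5)*(2/5)*(1/5) + (2/5)^2*(1/5)/2 = 2/25 := by
  refine ⟨fun b c d hb hc hd hs => ?_, by norm_num⟩
  rw [objective_eq_of_add_eq_one hs]
  rcases le_total c (4/5) with hc45 | hc45
  · calc c/2 * ((1 - c)^2 + d * (c - d)) ≤ c/2 * ((1 - c)^2 + c^2/4) := by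
          gcongr; exact mul_sub_le_sq_div_four c d
      _ ≤ 2/25 := cubic_le_of_le hc45
  · have hd1 : d ≤ 1 - c := by linarith
    calc c/2 * ((1 - c)^2 + d * (c - d)) ≤ c/2 * ((1 - c)^2 + (1 - c) * c) := by
          gcongr <;> linarith
      _ = c * (1 - c) / 2 := by ring
      _ ≤ 2/25 := by nlinarith [mul_nonneg (sub_nonneg.2 hc45) (by linarith : (0:ℝ) ≤ c - 1/5)]
end

section
/- For an integer k ≥ 2, let f(a) = (a/(2k))³·C(2k,3) + (a/(2k))²·C(2k,2)·(1−a) + a(1−a)²/2 for a ∈ [0,1]. Then f attains its maximum on [0,1] at a* = (2k² + k − k√(4k−1))/(2k²+1), and f(a*) = (2k − 6k³ + 4k⁴ − k√(4k−1) + 4k²√(4k−1)) / (6(2k²+1)²). -/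
/-!
With the binomial coefficients expanded, `f` is a cubic with leading coefficient
`(2k² + 1) / (12k²) > 0`. Writing `s = √(4k - 1)`, so that `k = (s² + 1) / 4`, it factors as
`f(a*) - f(x) = (2k² + 1) / (12k²) · (x - a*)² · (b - x)` with `b = k(2k + 1 + 2s) / (2k² + 1)`:
`a*` is a double root of `f(a*) - f`, i.e. a critical point of `f`. Since `b ≥ 1`,
`a*` maximizes `f` on `(-∞, b] ⊇ [0, 1]`.
-/

open Set

theorem Nat.cast_choose_three (K : Type*) [Field K] [CharZero K] (a : ℕ) :
    (a.choose 3 : K) = a * (a - 1) * (a - 2) / 6 := by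
  rw [Nat.cast_choose_eq_descPochhammer_div]
  simp [descPochhammer_succ_eval, Nat.factorial]

theorem isMaxOn_Iic_of_sub_eq {f : ℝ → ℝ} {a b c : ℝ} (hc : 0 ≤ c)
    (h : ∀ x, f a - f x = c * (x - a) ^ 2 * (b - x)) : IsMaxOn f (Iic b) a := fun x hx =>
  sub_nonneg.1 <| h x ▸ mul_nonneg (mul_nonneg hc (sq_nonneg _)) (sub_nonneg.2 hx)

noncomputable def objective (k a : ℝ) : ℝ :=
  (a / (2 * k)) ^ 3 * (2 * k * (2 * k - 1) * (2 * k - 2) / 6)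
    + (a / (2 * k)) ^ 2 * (2 * k * (2 * k - 1) / 2) * (1 - a) + a * (1 - a) ^ 2 / 2

section
variable {k s : ℝ}

theorem objective_argmax_sub (hs : s ^ 2 = 4 * k - 1) (x : ℝ) :
    objective k ((2 * k ^ 2 + k - k * s) / (2 * k ^ 2 + 1)) - objective k x
      = (2 * k ^ 2 + 1) / (12 * k ^ 2) * (x - (2 * k ^ 2 + k - k * s) / (2 * k ^ 2 + 1)) ^ 2
        * ((2 * k ^ 2 + k + 2 * k * s) / (2 * k ^ 2 + 1) - x) := by
  obtain rfl : k = (s ^ 2 + 1) / 4 := by linarith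
  unfold objective
  field_simp
  ring

theorem objective_argmax (hs : s ^ 2 = 4 * k - 1) :
    objective k ((2 * k ^ 2 + k - k * s) / (2 * k ^ 2 + 1))
      = (2 * k - 6 * k ^ 3 + 4 * k ^ 4 - k * s + 4 * k ^ 2 * s) / (6 * (2 * k ^ 2 + 1) ^ 2) := by
  obtain rfl : k = (s ^ 2 + 1) / 4 := by linarith
  unfold objective
  field_simp
  ring

theorem isMaxOn_objective (hk : 1 / 2 ≤ k) (hs : s ^ 2 = 4 * k - 1) (hs0 : 0 ≤ s) :
    IsMaxOn (objective k) (Icc 0 1) ((2 * k ^ 2 + k - k * s) / (2 * k ^ 2 + 1)) := by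
  have hb : 1 ≤ (2 * k ^ 2 + k + 2 * k * s) / (2 * k ^ 2 + 1) := by
    rw [one_le_div (by positivity)]
    nlinarith
  exact (isMaxOn_Iic_of_sub_eq (by positivity) (objective_argmax_sub hs)).on_subset
    fun x hx => hx.2.trans hb
end

theorem stmt_7 (k : ℕ) (hk : 2 ≤ k) :
    IsMaxOn (fun a : ℝ => (a/(2*k))^3 * (Nat.choose (2*k) 3 : ℝ)
        + (a/(2*k))^2 * (Nat.choose (2*k) 2 : ℝ) * (1 - a) + a*(1-a)^2/2)
      (Set.Icc 0 1)
      ((2*(k:ℝ)^2 + k - k*Real.sqrt (4*(k:ℝ) - 1)) / (2*(k:ℝ)^2 + 1)) ∧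
    (fun a : ℝ => (a/(2*k))^3 * (Nat.choose (2*k) 3 : ℝ)
        + (a/(2*k))^2 * (Nat.choose (2*k) 2 : ℝ) * (1 - a) + a*(1-a)^2/2)
      ((2*(k:ℝ)^2 + k - k*Real.sqrt (4*(k:ℝ) - 1)) / (2*(k:ℝ)^2 + 1))
      = (2*(k:ℝ) - 6*(k:ℝ)^3 + 4*(k:ℝ)^4 - (k:ℝ)*Real.sqrt (4*(k:ℝ) - 1)
        + 4*(k:ℝ)^2*Real.sqrt (4*(k:ℝ) - 1)) / (6*(2*(k:ℝ)^2 + 1)^2) := by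
  have hchoose : (fun a : ℝ => (a/(2*k))^3 * (Nat.choose (2*k) 3 : ℝ)
      + (a/(2*k))^2 * (Nat.choose (2*k) 2 : ℝ) * (1 - a) + a*(1-a)^2/2) = objective k := by
    ext a
    simp only [Nat.cast_choose_three, Nat.cast_choose_two, Nat.cast_mul, Nat.cast_ofNat, objective]
  have hk' : (2 : ℝ) ≤ k := mod_cast hk
  have hs : Real.sqrt (4 * k - 1) ^ 2 = 4 * k - 1 := Real.sq_sqrt (by linarith)
  rw [hchoose]
  exact ⟨isMaxOn_objective (by linarith) hs (Real.sqrt_nonneg _), objective_argmax hs⟩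
end

section
/- Suppose a, b, c, d > 0 with a+b+c+d = 1 satisfy the stationarity conditions a = 2b − 2c, c²/2 = cd + a²/4, and c = (13b² − 6b)/(8b − 4) (with 8b−4 ≠ 0). Then b ∈ {2/5, 4/9, 2/3}, and in each case one of the constraints a > 0, d > 0 fails; hence no interior critical point of λ(a,b,c,d) = (a²/4+ab+b²/2)c + (a+b)cd + c²d/2 + a²b/4 exists. -/
/-!
Eliminating `d = 1 - a - b - c` and `a = 2b - 2c` turns the second condition into the conic
`3c² - 10bc + 2c + 2b² = 0`. Together with `c (8b - 4) = 13b² - 6b` its resultant in `c` is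
`b (5b - 2)(9b - 4)(3b - 2)`, so `b ∈ {2/5, 4/9, 2/3}`, and then `c` is `2/5`, `2/9`, `4/3`
respectively. The three candidates have `a = 0`, `d = -1/9` and `a = -4/3`.
-/

lemma stationary_conic {a b c d : ℝ} (hsum : a + b + c + d = 1) (ha : a = 2*b - 2*c)
    (hcd : c^2/2 = c*d + a^2/4) : 3*c^2 - 10*b*c + 2*c + 2*b^2 = 0 := by
  obtain rfl : d = 1 - 3*b + c := by linarith
  subst ha
  linear_combination (-2) * hcd

lemma conic_resultant_eq_zero {b c : ℝ} (hconic : 3*c^2 - 10*b*c + 2*c + 2*b^2 = 0)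
    (hc : c * (8*b - 4) = 13*b^2 - 6*b) : b * (5*b - 2) * (9*b - 4) * (3*b - 2) = 0 := by
  -- multiply the conic by `(8b - 4)²` and substitute `c (8b - 4)`
  linear_combination (-16*(2*b - 1)^2/3) * hconic +
    ((3*(c*(8*b - 4)) + 3*(13*b^2 - 6*b) - (40*b - 8)*(2*b - 1))/3) * hc

lemma mem_of_conic_resultant {b : ℝ} (hb : 0 < b)
    (h : b * (5*b - 2) * (9*b - 4) * (3*b - 2) = 0) : b = 2/5 ∨ b = 4/9 ∨ b = 2/3 := by
  rcases mul_eq_zero.1 h with h | h3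
  · rcases mul_eq_zero.1 h with h | h2
    · rcases mul_eq_zero.1 h with h0 | h1
      · exact absurd h0 hb.ne'
      · left; linarith
    · right; left; linarith
  · right; right; linarith

theorem stmt_13 :
    ¬ ∃ a b c d : ℝ, 0 < a ∧ 0 < b ∧ 0 < c ∧ 0 < d ∧ a + b + c + d = 1 ∧
      a = 2*b - 2*c ∧ c^2/2 = c*d + a^2/4 ∧ 8*b - 4 ≠ 0 ∧
      c = (13*b^2 - 6*b)/(8*b - 4) := by
  rintro ⟨a, b, c, d, ha, hb, -, hd, hsum, hab, hcd, hb8, hcb⟩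
  have hc : c * (8*b - 4) = 13*b^2 - 6*b := by rw [hcb]; exact div_mul_cancel₀ _ hb8
  have hconic := stationary_conic hsum hab hcd
  obtain rfl | rfl | rfl := mem_of_conic_resultant hb (conic_resultant_eq_zero hconic hc)
  · obtain rfl : c = 2/5 := by linarith
    linarith
  · obtain rfl : c = 2/9 := by linarith
    linarith
  · obtain rfl : c = 4/3 := by linarith
    linarith
end

section
/- For an integer k ≥ 2, the maximization over w₁ ∈ [0,1] of F(w₁) = (w₁/(2k))³·C(2k,3) + (w₁/(2k))²·C(2k,2)·(1−w₁) + w₁(1−w₁)²/2 satisfies F(w₁) ≤ (2k − 6k³ + 4k⁴ − k√(4k−1) + 4k²√(4k−1))/(6(2k²+1)²) for all w₁ ∈ [0,1]. -/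
/-!
Clearing denominators, 12k²·F(w) is the cubic p(w) = (2k²+1)w³ − 3k(2k+1)w² + 6k²w. With
s = √(4k−1), the bound minus p(w) (suitably scaled) factors as a square times
k(2k+1) + 2ks − (2k²+1)w, which is nonnegative for w ≤ 1. The double root
w = k(2k+1−s)/(2k²+1) is the interior maximiser of F.
-/

theorem Nat.cast_choose_three_s19 {R : Type*} [DivisionRing R] [CharZero R] (n : ℕ) :
    (n.choose 3 : R) = n * (n - 1) * (n - 2) / 6 := by
  rw [Nat.cast_choose_eq_descPochhammer_div]
  simp [descPochhammer_succ_eval, Nat.factorial]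

theorem bound_mul_sub_cubic_mul_eq {R : Type*} [CommRing R] {K s : R} (hs : s ^ 2 = 4 * K - 1)
    (w : R) :
    (2*K - 6*K^3 + 4*K^4 - K*s + 4*K^2*s) * (12*K^2)
      - ((2*K^2+1)*w^3 - 3*K*(2*K+1)*w^2 + 6*K^2*w) * (6*(2*K^2+1)^2)
      = 6 * (((2*K^2+1)*w - K*(2*K+1-s))^2 * (K*(2*K+1) + 2*K*s - (2*K^2+1)*w)) := by
  linear_combination (36*K^4 + 18*K^3 - 12*K^3*s - 36*K^4*w - 18*K^2*w) * hs

theorem cubic_le_bound {K w : ℝ} (hK : 1 ≤ K) (hw : w ≤ 1) :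
    ((2*K^2+1)*w^3 - 3*K*(2*K+1)*w^2 + 6*K^2*w) * (6*(2*K^2+1)^2) ≤
      (2*K - 6*K^3 + 4*K^4 - K*√(4*K-1) + 4*K^2*√(4*K-1)) * (12*K^2) := by
  have hs := Real.sq_sqrt (show (0:ℝ) ≤ 4*K-1 by linarith)
  have hlin : 0 ≤ K*(2*K+1) + 2*K*√(4*K-1) - (2*K^2+1)*w := by
    nlinarith [Real.sqrt_nonneg (4*K-1)]
  have := bound_mul_sub_cubic_mul_eq hs w
  nlinarith [mul_nonneg (sq_nonneg ((2*K^2+1)*w - K*(2*K+1-√(4*K-1)))) hlin]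

theorem stmt_19_general (k : ℕ) (hk : 2 ≤ k) (w₁ : ℝ) (h1 : w₁ ≤ 1) :
    (w₁/(2*k))^3 * (Nat.choose (2*k) 3 : ℝ)
      + (w₁/(2*k))^2 * (Nat.choose (2*k) 2 : ℝ) * (1 - w₁)
      + w₁*(1 - w₁)^2/2
    ≤ (2*(k:ℝ) - 6*(k:ℝ)^3 + 4*(k:ℝ)^4 - (k:ℝ)*Real.sqrt (4*(k:ℝ) - 1)
        + 4*(k:ℝ)^2*Real.sqrt (4*(k:ℝ) - 1)) / (6*(2*(k:ℝ)^2 + 1)^2) := by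
  have hK : (1:ℝ) ≤ k := by exact_mod_cast (by omega : 1 ≤ k)
  have hK0 : (k:ℝ) ≠ 0 := by positivity
  have hF : (w₁/(2*k))^3 * (Nat.choose (2*k) 3 : ℝ)
      + (w₁/(2*k))^2 * (Nat.choose (2*k) 2 : ℝ) * (1 - w₁) + w₁*(1 - w₁)^2/2
      = ((2*k^2+1)*w₁^3 - 3*k*(2*k+1)*w₁^2 + 6*k^2*w₁) / (12*k^2) := by
    rw [Nat.cast_choose_three_s19, Nat.cast_choose_two]
    push_cast
    field_simp
    ring
  rw [hF, div_le_div_iff₀ (by positivity) (by positivity)]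
  exact cubic_le_bound hK h1

theorem stmt_19 (k : ℕ) (hk : 2 ≤ k) (w₁ : ℝ) (h0 : 0 ≤ w₁) (h1 : w₁ ≤ 1) :
    (w₁/(2*k))^3 * (Nat.choose (2*k) 3 : ℝ)
      + (w₁/(2*k))^2 * (Nat.choose (2*k) 2 : ℝ) * (1 - w₁)
      + w₁*(1 - w₁)^2/2
    ≤ (2*(k:ℝ) - 6*(k:ℝ)^3 + 4*(k:ℝ)^4 - (k:ℝ)*Real.sqrt (4*(k:ℝ) - 1)
        + 4*(k:ℝ)^2*Real.sqrt (4*(k:ℝ) - 1)) / (6*(2*(k:ℝ)^2 + 1)^2) :=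
  stmt_19_general k hk w₁ h1
end
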